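/- Let 2 ≤ α ≤ 3 and let m ≥ 1 be an integer. Then m^{−α} · ∑_{n=1}^m n^{α−1} ≤ 1/α + 1/(2m) + (α−1)/(12m²). -/

import Mathlib

/-!
Put `f x = x ^ (α - 1)` and `F x = x ^ α / α + f x / 2 + f' x / 12`, the Euler–Maclaurin
approximation of `∑_{n ≤ x} f n`. Then `F (n + 1) - F n - f (n + 1)` is the error
`∫ f - (trapezoid rule with endpoint correction)` on `[n, n + 1]`, which is nonnegative because
`f''''` has the sign of `(α - 1)(α - 2)(α - 3)(α - 4) ≥ 0`. Hence `∑_{n ≤ m} f n ≤ F m` by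
telescoping from `F 1 ≥ 1`, and `m ^ (-α) * F m` is exactly the claimed bound.

The error estimate is proved without integrals: on `[c - s, c + s]` both the trapezoid error and
the corrected one vanish at `s = 0`, and their derivatives in `s` are nonnegative as soon as `f'''`
is monotone.
-/

open Real Set

theorem le_of_hasDerivAt_nonneg {f f' : ℝ → ℝ} {a b : ℝ} (hab : a ≤ b)
    (hf : ∀ x ∈ Icc a b, HasDerivAt f (f' x) x) (hf' : ∀ x ∈ Ioo a b, 0 ≤ f' x) :
    f a ≤ f b := by
  have hmono : MonotoneOn f (Icc a b) :=
    monotoneOn_of_hasDerivWithinAt_nonneg (convex_Icc a b)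
      (fun x hx ↦ (hf x hx).continuousAt.continuousWithinAt)
      (fun x hx ↦ (hf x (interior_subset hx)).hasDerivWithinAt)
      (fun x hx ↦ hf' x (by rwa [interior_Icc] at hx))
  exact hmono (left_mem_Icc.2 hab) (right_mem_Icc.2 hab) hab

section CorrectedTrapezoid

variable {G f f₁ f₂ f₃ : ℝ → ℝ} {c h : ℝ}

theorem sub_le_trapezoid_of_monotoneOn_deriv (hh : 0 ≤ h)
    (hf₁ : ∀ x ∈ Icc (c - h) (c + h), HasDerivAt f₁ (f₂ x) x)
    (hf₂ : ∀ x ∈ Icc (c - h) (c + h), HasDerivAt f₂ (f₃ x) x)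
    (hf₃ : MonotoneOn f₃ (Icc (c - h) (c + h))) :
    f₁ (c + h) - f₁ (c - h) ≤ h * (f₂ (c - h) + f₂ (c + h)) := by
  have hmem : ∀ s ∈ Icc 0 h, c - s ∈ Icc (c - h) (c + h) ∧ c + s ∈ Icc (c - h) (c + h) :=
    fun s ⟨hs0, hsh⟩ ↦ ⟨⟨by linarith, by linarith⟩, ⟨by linarith, by linarith⟩⟩
  have key := le_of_hasDerivAt_nonneg
    (f := fun s ↦ s * (f₂ (c - s) + f₂ (c + s)) - (f₁ (c + s) - f₁ (c - s)))
    (f' := fun s ↦ s * (f₃ (c + s) - f₃ (c - s))) hh ?_ ?_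
  · simpa using key
  · intro s hs
    obtain ⟨hm, hp⟩ := hmem s hs
    have := ((hasDerivAt_id s).mul
      (((hf₂ _ hm).comp_const_sub c s).add ((hf₂ _ hp).comp_const_add c s))).sub
      (((hf₁ _ hp).comp_const_add c s).sub ((hf₁ _ hm).comp_const_sub c s))
    exact this.congr_deriv (by simp only [id, Pi.add_apply]; ring)
  · intro s hs
    obtain ⟨hm, hp⟩ := hmem s (Ioo_subset_Icc_self hs)
    exact mul_nonneg hs.1.le (sub_nonneg.2 (hf₃ hm hp (by linarith [hs.1])))

theorem corrected_trapezoid_le_sub_of_monotoneOn_deriv (hh : 0 ≤ h)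
    (hG : ∀ x ∈ Icc (c - h) (c + h), HasDerivAt G (f x) x)
    (hf : ∀ x ∈ Icc (c - h) (c + h), HasDerivAt f (f₁ x) x)
    (hf₁ : ∀ x ∈ Icc (c - h) (c + h), HasDerivAt f₁ (f₂ x) x)
    (hf₂ : ∀ x ∈ Icc (c - h) (c + h), HasDerivAt f₂ (f₃ x) x)
    (hf₃ : MonotoneOn f₃ (Icc (c - h) (c + h))) :
    h * (f (c - h) + f (c + h)) - h ^ 2 / 3 * (f₁ (c + h) - f₁ (c - h)) ≤ G (c + h) - G (c - h) := by
  have hsub : ∀ s ∈ Icc 0 h, Icc (c - s) (c + s) ⊆ Icc (c - h) (c + h) :=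
    fun s ⟨_, hsh⟩ ↦ Icc_subset_Icc (by linarith) (by linarith)
  have hmem : ∀ s ∈ Icc 0 h, c - s ∈ Icc (c - h) (c + h) ∧ c + s ∈ Icc (c - h) (c + h) :=
    fun s hs ↦ ⟨hsub s hs ⟨le_rfl, by linarith [hs.1]⟩, hsub s hs ⟨by linarith [hs.1], le_rfl⟩⟩
  have key := le_of_hasDerivAt_nonneg
    (f := fun s ↦ G (c + s) - G (c - s) - s * (f (c - s) + f (c + s))
      + s ^ 2 / 3 * (f₁ (c + s) - f₁ (c - s)))
    (f' := fun s ↦ s / 3 * (s * (f₂ (c - s) + f₂ (c + s)) - (f₁ (c + s) - f₁ (c - s)))) hh ?_ ?_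
  · simp only [sub_self, add_zero, sub_zero, zero_mul, ne_eq, OfNat.ofNat_ne_zero,
      not_false_eq_true, zero_pow, zero_div] at key
    linarith
  · intro s hs
    obtain ⟨hm, hp⟩ := hmem s hs
    have := ((((hG _ hp).comp_const_add c s).sub ((hG _ hm).comp_const_sub c s)).sub
      ((hasDerivAt_id s).mul (((hf _ hm).comp_const_sub c s).add ((hf _ hp).comp_const_add c s)))).add
      (((hasDerivAt_pow 2 s).div_const 3).mul
        (((hf₁ _ hp).comp_const_add c s).sub ((hf₁ _ hm).comp_const_sub c s)))
    exact this.congr_deriv (by simp only [id, Pi.add_apply, Pi.sub_apply]; ring)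
  · intro s hs
    have hs' := Ioo_subset_Icc_self hs
    refine mul_nonneg (by linarith [hs.1]) (sub_nonneg.2 ?_)
    exact sub_le_trapezoid_of_monotoneOn_deriv hs'.1
      (fun x hx ↦ hf₁ x (hsub s hs' hx)) (fun x hx ↦ hf₂ x (hsub s hs' hx))
      (hf₃.mono (hsub s hs'))

end CorrectedTrapezoid

theorem hasDerivAt_const_mul_rpow (a p : ℝ) {x : ℝ} (hx : 0 < x) :
    HasDerivAt (fun y ↦ a * y ^ p) (a * p * x ^ (p - 1)) x := by
  simpa [mul_assoc] using (hasDerivAt_rpow_const (p := p) (Or.inl hx.ne')).const_mul a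

noncomputable def eulerMaclaurinRpow (α x : ℝ) : ℝ :=
  x ^ α / α + x ^ (α - 1) / 2 + (α - 1) * x ^ (α - 2) / 12

theorem eulerMaclaurinRpow_add_rpow_le {α x : ℝ} (hα₂ : 2 ≤ α) (hα₃ : α ≤ 3) (hx : 0 < x) :
    eulerMaclaurinRpow α x + (x + 1) ^ (α - 1) ≤ eulerMaclaurinRpow α (x + 1) := by
  have hpos : ∀ y ∈ Icc (x + 1 / 2 - 1 / 2) (x + 1 / 2 + 1 / 2), 0 < y :=
    fun y hy ↦ by linarith [hy.1]
  have key := corrected_trapezoid_le_sub_of_monotoneOn_deriv (c := x + 1 / 2)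
    (by norm_num : (0 : ℝ) ≤ 1 / 2)
    (G := fun y ↦ α⁻¹ * y ^ α) (f := fun y ↦ 1 * y ^ (α - 1))
    (f₁ := fun y ↦ (α - 1) * y ^ (α - 2)) (f₂ := fun y ↦ (α - 1) * (α - 2) * y ^ (α - 3))
    (f₃ := fun y ↦ (α - 1) * (α - 2) * (α - 3) * y ^ (α - 4))
    (fun y hy ↦ (hasDerivAt_const_mul_rpow _ _ (hpos y hy)).congr_deriv (by field_simp))
    (fun y hy ↦ (hasDerivAt_const_mul_rpow _ _ (hpos y hy)).congr_deriv (by ring_nf))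
    (fun y hy ↦ (hasDerivAt_const_mul_rpow _ _ (hpos y hy)).congr_deriv (by ring_nf))
    (fun y hy ↦ (hasDerivAt_const_mul_rpow _ _ (hpos y hy)).congr_deriv (by ring_nf))
    (fun y hy z _ hyz ↦ mul_le_mul_of_nonpos_left
      (rpow_le_rpow_of_nonpos (hpos y hy) hyz (by linarith))
      (mul_nonpos_of_nonneg_of_nonpos (by nlinarith) (by linarith)))
  rw [show x + 1 / 2 - 1 / 2 = x by ring, show x + 1 / 2 + 1 / 2 = x + 1 by ring] at key
  simp only [eulerMaclaurinRpow, one_mul] at key ⊢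
  linear_combination key

theorem sum_rpow_le_eulerMaclaurinRpow {α : ℝ} (hα₂ : 2 ≤ α) (hα₃ : α ≤ 3) {m : ℕ} (hm : 1 ≤ m) :
    ∑ n ∈ Finset.Icc 1 m, (n : ℝ) ^ (α - 1) ≤ eulerMaclaurinRpow α m := by
  induction m, hm using Nat.le_induction with
  | base =>
    have hquad : 0 ≤ (3 - α) * (4 - α) := mul_nonneg (by linarith) (by linarith)
    simp only [Finset.Icc_self, Finset.sum_singleton, Nat.cast_one, one_rpow, eulerMaclaurinRpow]
    rw [div_add_div _ _ (by positivity) (by norm_num), div_add_div _ _ (by positivity) (by norm_num),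
      le_div_iff₀ (by positivity)]
    nlinarith
  | succ n hn ih =>
    rw [Finset.sum_Icc_succ_top (by omega), Nat.cast_succ]
    linarith [eulerMaclaurinRpow_add_rpow_le hα₂ hα₃ (x := n) (by exact_mod_cast hn)]

theorem partial_sum_upper_bound_two_three (α : ℝ) (hα1 : 2 ≤ α) (hα2 : α ≤ 3) (m : ℕ+) :
    (m : ℝ) ^ (-α) * ∑ n ∈ Finset.Icc 1 (m : ℕ), (n : ℝ) ^ (α - 1)
      ≤ 1/α + 1/(2*(m : ℝ)) + (α - 1)/(12*(m : ℝ)^2) := by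
  have hm : (0 : ℝ) < m := by positivity
  calc (m : ℝ) ^ (-α) * ∑ n ∈ Finset.Icc 1 (m : ℕ), (n : ℝ) ^ (α - 1)
      ≤ (m : ℝ) ^ (-α) * eulerMaclaurinRpow α m :=
        mul_le_mul_of_nonneg_left (sum_rpow_le_eulerMaclaurinRpow hα1 hα2 m.pos) (by positivity)
    _ = 1/α + 1/(2*(m : ℝ)) + (α - 1)/(12*(m : ℝ)^2) := by
      simp only [eulerMaclaurinRpow, rpow_sub hm, rpow_neg hm.le, rpow_one, rpow_two]
      field_simp
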